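/- arXiv:1212.1098 — 4 statements merged into one kernel-verified Lean document; each statement's English description precedes it below -/
import Mathlib

section
/- For any ρ ≥ 0 and ε ∈ [0,1/2], the function f(ε) = (ε^(1/(1+ρ)) + (1-ε)^(1/(1+ρ)))^(1+ρ) is non-decreasing in ε. -/
/-! With `p = 1 / (1 + ρ) ∈ (0, 1]`, the map `g ε = ε ^ p + (1 - ε) ^ p` is concave on `[0, 1]`
and symmetric under `ε ↦ 1 - ε`. For `x ≤ y ≤ 1/2` the point `y` lies between `x` and `1 - x`,
so concavity gives `g y ≥ min (g x) (g (1 - x)) = g x`. Raising to the power `1 + ρ ≥ 0`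
preserves the order of the nonnegative values of `g`. -/

open Set

section Symmetric

variable {𝕜 β : Type*} [Field 𝕜] [LinearOrder 𝕜] [IsStrictOrderedRing 𝕜]
  [AddCommGroup β] [LinearOrder β] [IsOrderedAddMonoid β] [Module 𝕜 β]
  [IsStrictOrderedModule 𝕜 β] {f : 𝕜 → β} {a b : 𝕜}

theorem ConcaveOn.monotoneOn_of_symmetric (hf : ConcaveOn 𝕜 (Icc a b) f)
    (hsymm : ∀ x ∈ Icc a b, f (a + b - x) = f x) : MonotoneOn f (Icc a ((a + b) / 2)) := by
  intro x ⟨hax, hxm⟩ y ⟨_, hym⟩ hxy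
  have hx : x ∈ Icc a b := ⟨hax, by linarith⟩
  have hx' : a + b - x ∈ Icc a b := ⟨by linarith, by linarith⟩
  have hy : y ∈ Icc x (a + b - x) := ⟨hxy, by linarith⟩
  simpa [hsymm x hx] using hf.min_le_of_mem_Icc hx hx' hy

end Symmetric

theorem ConcaveOn.comp_sub_left {𝕜 E β : Type*} [Field 𝕜] [LinearOrder 𝕜] [AddCommGroup E]
    [Module 𝕜 E] [AddCommMonoid β] [PartialOrder β] [SMul 𝕜 β] {f : E → β} {s : Set E}
    (hf : ConcaveOn 𝕜 s f) (c : E) : ConcaveOn 𝕜 ((c - ·) ⁻¹' s) (fun x => f (c - x)) :=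
  hf.comp_affineMap (AffineMap.const 𝕜 E c - AffineMap.id 𝕜 E)

theorem concaveOn_rpow_add_one_sub_rpow {p : ℝ} (hp₀ : 0 ≤ p) (hp₁ : p ≤ 1) :
    ConcaveOn ℝ (Icc 0 1) (fun ε : ℝ => ε ^ p + (1 - ε) ^ p) := by
  have hpow := Real.concaveOn_rpow hp₀ hp₁
  refine (hpow.subset Icc_subset_Ici_self (convex_Icc 0 1)).add ?_
  exact (hpow.comp_sub_left 1).subset (fun ε hε => by simp [hε.2]) (convex_Icc 0 1)

/-- For any ρ ≥ 0, the function f(ε) = (ε^(1/(1+ρ)) + (1-ε)^(1/(1+ρ)))^(1+ρ)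
is non-decreasing in ε on [0, 1/2]. -/
theorem fbsc_monotone (ρ : ℝ) (hρ : 0 ≤ ρ) :
    MonotoneOn (fun ε : ℝ => (ε ^ (1/(1+ρ)) + (1-ε) ^ (1/(1+ρ))) ^ (1+ρ))
      (Set.Icc (0:ℝ) (1/2)) := by
  set p := 1 / (1 + ρ)
  have hp₀ : 0 ≤ p := by positivity
  have hp₁ : p ≤ 1 := by rw [div_le_one (by positivity)]; linarith
  have hg : MonotoneOn (fun ε : ℝ => ε ^ p + (1 - ε) ^ p) (Icc 0 (1 / 2)) := by
    simpa using (concaveOn_rpow_add_one_sub_rpow hp₀ hp₁).monotoneOn_of_symmetric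
      (fun ε _ => by simp [add_comm])
  have hg_nonneg : MapsTo (fun ε : ℝ => ε ^ p + (1 - ε) ^ p) (Icc 0 (1 / 2)) (Ici 0) :=
    fun ε hε => mem_Ici.2 (add_nonneg (Real.rpow_nonneg hε.1 p)
      (Real.rpow_nonneg (by linarith [hε.2]) p))
  exact (Real.monotoneOn_rpow_Ici_of_exponent_nonneg (by linarith)).comp hg hg_nonneg
end

section
/- For all z ∈ (0,1) and all ρ > -1, the quantity g(z,ρ) = ρ/(1+ρ) + (1 - z + z^(1/(1+ρ)) - z^(ρ/(1+ρ))) / ((1+z) ln z) is non-negative. -/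
/-!
With `s = 1/(1+ρ)`, `a = z^s` and `b = z^(1-s)` (so `a b = z`), clearing the negative denominator
`(1+z) log z` turns the claim into `(1 + a b) log b ≤ (1 + a)(b - 1)` for `0 ≤ a ≤ 1`, `a b ≤ 1`.
For `b ≤ 1` this follows from `log b ≤ 2(b-1)/(b+1)`, for `b > 1` from `log b ≤ (b-1)/√b`:
the two halves of the logarithmic-mean inequality `√b ≤ (b-1)/log b ≤ (b+1)/2`.
-/

open Real

lemma two_mul_log_le_sub_inv {t : ℝ} (ht : 1 ≤ t) : 2 * log t ≤ t - t⁻¹ := by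
  have ht0 : 0 < t := by linarith
  have hsinh : log t ≤ sinh (log t) := self_le_sinh_iff.mpr (log_nonneg ht)
  rw [sinh_eq, exp_neg, exp_log ht0] at hsinh
  linarith

lemma log_le_two_mul_sub_one_div_add_one {x : ℝ} (hx0 : 0 < x) (hx1 : x ≤ 1) :
    log x ≤ 2 * (x - 1) / (x + 1) := by
  have hinv : 1 ≤ x⁻¹ := one_le_inv_iff₀.mpr ⟨hx0, hx1⟩
  have h := le_log_one_add_of_nonneg (x := x⁻¹ - 1) (by linarith)
  rw [add_sub_cancel, log_inv, div_le_iff₀ (by linarith)] at h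
  rw [le_div_iff₀ (by positivity)]
  field_simp at h
  linarith

lemma one_add_mul_mul_log_le {a b : ℝ} (ha : 0 ≤ a) (hb : 0 < b) (ha1 : a ≤ 1) (hab : a * b ≤ 1) :
    (1 + a * b) * log b ≤ (1 + a) * (b - 1) := by
  rcases le_or_gt b 1 with hb1 | hb1
  · calc (1 + a * b) * log b ≤ (1 + a * b) * (2 * (b - 1) / (b + 1)) := by
          gcongr
          exact log_le_two_mul_sub_one_div_add_one hb hb1
      _ ≤ (1 + a) * (b - 1) := by
          rw [mul_div_assoc', div_le_iff₀ (by positivity)]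
          nlinarith [mul_nonneg (sub_nonneg.2 ha1) (sub_nonneg.2 hb1)]
  · set t := √b
    have ht1 : 1 ≤ t := one_le_sqrt.mpr hb1.le
    have htb : t ^ 2 = b := sq_sqrt hb.le
    have hat : a * t ≤ 1 := by nlinarith
    calc (1 + a * b) * log b = (1 + a * b) * (2 * log t) := by rw [log_sqrt hb.le]; ring
      _ ≤ (1 + a * b) * (t - t⁻¹) := by gcongr; exact two_mul_log_le_sub_inv ht1
      _ ≤ (1 + a) * (b - 1) := by
          rw [← htb]
          have : t - t⁻¹ = (t ^ 2 - 1) / t := by field_simp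
          rw [this, mul_div_assoc', div_le_iff₀ (by positivity)]
          nlinarith [mul_nonneg (sub_nonneg.2 ht1) (sub_nonneg.2 hat)]

lemma one_sub_mul_log_add_rpow_sub_rpow_nonpos {z s : ℝ} (hz0 : 0 < z) (hz1 : z ≤ 1) (hs : 0 ≤ s) :
    (1 - s) * ((1 + z) * log z) + (1 - z + z ^ s - z ^ (1 - s)) ≤ 0 := by
  have hab : z ^ s * z ^ (1 - s) = z := by rw [← rpow_add hz0, add_sub_cancel, rpow_one]
  have key := one_add_mul_mul_log_le (rpow_nonneg hz0.le s) (rpow_pos_of_pos hz0 (1 - s))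
    (rpow_le_one hz0.le hz1 hs) (hab.trans_le hz1)
  rw [hab, log_rpow hz0] at key
  nth_rewrite 3 [← hab]
  linarith

/-- For z ∈ (0,1) and ρ > -1, g(z,ρ) ≥ 0. -/
theorem g_nonneg (z ρ : ℝ) (hz : z ∈ Set.Ioo (0:ℝ) 1) (hρ : -1 < ρ) :
    0 ≤ ρ/(1+ρ) + (1 - z + z ^ (1/(1+ρ)) - z ^ (ρ/(1+ρ))) / ((1+z) * Real.log z) := by
  obtain ⟨hz0, hz1⟩ := hz
  have hρ1 : 0 < 1 + ρ := by linarith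
  have hρs : ρ / (1 + ρ) = 1 - 1 / (1 + ρ) := by field_simp; ring
  have hD : (1 + z) * log z < 0 := mul_neg_of_pos_of_neg (by linarith) (log_neg hz0 hz1)
  have hN := one_sub_mul_log_add_rpow_sub_rpow_nonpos hz0 hz1.le (s := 1 / (1 + ρ)) (by positivity)
  rw [hρs, ← neg_le_iff_add_nonneg', le_div_iff_of_neg hD]
  linarith
end

section
/- For all z ∈ (0,1), the function g₀(z,ρ) = 1 + z - z^(1/(1+ρ)) - z^(ρ/(1+ρ)) satisfies g₀(z,0) = 0, is non-decreasing in ρ on (-1,1], non-increasing in ρ on [1,∞), and tends to 0 as ρ → ∞. Consequently g₀(z,ρ) ≤ 0 for ρ ∈ (-1,0] and g₀(z,ρ) ≥ 0 for ρ ≥ 0. -/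
/-!
Put `t = (1 - ρ) / (1 + ρ)`. Since `1 / (1 + ρ) = 1/2 + t/2` and `ρ / (1 + ρ) = 1/2 - t/2`,
`z ^ (1 / (1 + ρ)) + z ^ (ρ / (1 + ρ)) = 2 √z cosh (t log z / 2)`, so for `z ≠ 1` the value
`g₀(z, ρ)` decreases as `|t|` grows. On `(-1, 1]` the quantity `t ≥ 0` decreases in `ρ`, on
`[1, ∞)` the quantity `t ≤ 0` decreases in `ρ`, and `t → -1` as `ρ → ∞`; as `cosh` is even, the
limit is the value at `t = 1`, i.e. `g₀(z, 0) = 0`. The signs follow from the monotonicity and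
the limit.
-/

noncomputable def g0 (z ρ : ℝ) : ℝ := 1 + z - z ^ (1/(1+ρ)) - z ^ (ρ/(1+ρ))

open Real Set Filter Topology

lemma g0_eq_cosh {z : ℝ} (hz : 0 < z) {ρ : ℝ} (hρ : 1 + ρ ≠ 0) :
    g0 z ρ = 1 + z - 2 * √z * cosh ((1 - ρ) / (1 + ρ) * (log z / 2)) := by
  have hsqrt : √z = exp (log z / 2) := by
    rw [sqrt_eq_rpow, rpow_def_of_pos hz]; ring_nf
  rw [g0, cosh_eq, hsqrt, rpow_def_of_pos hz, rpow_def_of_pos hz]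
  have e1 : log z * (1 / (1 + ρ)) = log z / 2 + (1 - ρ) / (1 + ρ) * (log z / 2) := by
    field_simp; ring
  have e2 : log z * (ρ / (1 + ρ)) = log z / 2 + -((1 - ρ) / (1 + ρ) * (log z / 2)) := by
    field_simp; ring
  rw [e1, e2, exp_add, exp_add]
  ring

lemma g0_le_g0_iff {z : ℝ} (hz : 0 < z) (hz1 : z ≠ 1) {ρ₁ ρ₂ : ℝ} (h₁ : 1 + ρ₁ ≠ 0)
    (h₂ : 1 + ρ₂ ≠ 0) :
    g0 z ρ₁ ≤ g0 z ρ₂ ↔ |(1 - ρ₂) / (1 + ρ₂)| ≤ |(1 - ρ₁) / (1 + ρ₁)| := by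
  have hlog : 0 < |log z / 2| := by
    simpa using log_ne_zero_of_pos_of_ne_one hz hz1
  rw [g0_eq_cosh hz h₁, g0_eq_cosh hz h₂, sub_le_sub_iff_left,
    mul_le_mul_iff_of_pos_left (by positivity), cosh_le_cosh, abs_mul, abs_mul,
    mul_le_mul_iff_of_pos_right hlog]

lemma antitoneOn_abs_one_sub_div_one_add :
    AntitoneOn (fun ρ : ℝ => |(1 - ρ) / (1 + ρ)|) (Ioc (-1) 1) := by
  rintro a ⟨ha, ha1⟩ b ⟨hb, hb1⟩ hab
  have ha' : 0 < 1 + a := by linarith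
  have hb' : 0 < 1 + b := by linarith
  dsimp only
  rw [abs_of_nonneg (div_nonneg (by linarith) hb'.le),
    abs_of_nonneg (div_nonneg (by linarith) ha'.le), div_le_div_iff₀ hb' ha']
  nlinarith

lemma monotoneOn_abs_one_sub_div_one_add :
    MonotoneOn (fun ρ : ℝ => |(1 - ρ) / (1 + ρ)|) (Ici 1) := by
  rintro a (ha : 1 ≤ a) b (hb : 1 ≤ b) hab
  have ha' : 0 < 1 + a := by linarith
  have hb' : 0 < 1 + b := by linarith
  dsimp only
  rw [abs_of_nonpos (div_nonpos_of_nonpos_of_nonneg (by linarith) hb'.le),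
    abs_of_nonpos (div_nonpos_of_nonpos_of_nonneg (by linarith) ha'.le), neg_le_neg_iff,
    div_le_div_iff₀ hb' ha']
  nlinarith

lemma tendsto_one_sub_div_one_add_atTop :
    Tendsto (fun ρ : ℝ => (1 - ρ) / (1 + ρ)) atTop (𝓝 (-1)) := by
  have h : Tendsto (fun ρ : ℝ => 2 / (1 + ρ) - 1) atTop (𝓝 (0 - 1)) :=
    (tendsto_const_nhds.div_atTop (tendsto_atTop_add_const_left _ 1 tendsto_id)).sub_const 1
  rw [zero_sub] at h
  refine h.congr' ?_
  filter_upwards [eventually_gt_atTop 0] with ρ hρ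
  field_simp
  ring

lemma tendsto_g0_atTop {z : ℝ} (hz : 0 < z) : Tendsto (g0 z) atTop (𝓝 (g0 z 0)) := by
  set F : ℝ → ℝ := fun t => 1 + z - 2 * √z * cosh (t * (log z / 2))
  have hF : Tendsto (fun ρ : ℝ => F ((1 - ρ) / (1 + ρ))) atTop (𝓝 (F (-1))) :=
    ((by fun_prop : Continuous F).tendsto _).comp tendsto_one_sub_div_one_add_atTop
  have hF_neg_one : F (-1) = g0 z 0 := by
    simp only [F, g0_eq_cosh hz (by norm_num : (1:ℝ) + 0 ≠ 0), neg_one_mul, cosh_neg]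
    norm_num
  rw [← hF_neg_one]
  refine hF.congr' ?_
  filter_upwards [eventually_gt_atTop 0] with ρ hρ
  exact (g0_eq_cosh hz (by linarith)).symm

lemma g0_monotoneOn {z : ℝ} (hz : z ∈ Ioo (0 : ℝ) 1) : MonotoneOn (g0 z) (Ioc (-1) 1) :=
  fun a ha b hb hab => (g0_le_g0_iff hz.1 hz.2.ne (by linarith [ha.1]) (by linarith [hb.1])).2
    (antitoneOn_abs_one_sub_div_one_add ha hb hab)

lemma g0_antitoneOn {z : ℝ} (hz : z ∈ Ioo (0 : ℝ) 1) : AntitoneOn (g0 z) (Ici 1) :=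
  fun a (ha : 1 ≤ a) b (hb : 1 ≤ b) hab =>
    (g0_le_g0_iff hz.1 hz.2.ne (by linarith) (by linarith)).2
      (monotoneOn_abs_one_sub_div_one_add ha hb hab)

/-- Properties of g₀(z,ρ) = 1 + z - z^(1/(1+ρ)) - z^(ρ/(1+ρ)) for z ∈ (0,1). -/
theorem g0_properties (z : ℝ) (hz : z ∈ Set.Ioo (0:ℝ) 1) :
    g0 z 0 = 0 ∧
    MonotoneOn (g0 z) (Set.Ioc (-1:ℝ) 1) ∧
    AntitoneOn (g0 z) (Set.Ici (1:ℝ)) ∧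
    Filter.Tendsto (g0 z) Filter.atTop (nhds 0) ∧
    (∀ ρ ∈ Set.Ioc (-1:ℝ) 0, g0 z ρ ≤ 0) ∧
    (∀ ρ : ℝ, 0 ≤ ρ → 0 ≤ g0 z ρ) := by
  have h0 : g0 z 0 = 0 := by simp [g0]
  have hmono := g0_monotoneOn hz
  have hanti := g0_antitoneOn hz
  have hlim : Tendsto (g0 z) atTop (𝓝 0) := h0 ▸ tendsto_g0_atTop hz.1
  have h0_mem : (0 : ℝ) ∈ Ioc (-1) 1 := by norm_num
  refine ⟨h0, hmono, hanti, hlim, fun ρ hρ => ?_, fun ρ hρ => ?_⟩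
  · exact h0 ▸ hmono ⟨hρ.1, by linarith [hρ.2]⟩ h0_mem hρ.2
  rcases le_total ρ 1 with hρ1 | hρ1
  · exact h0 ▸ hmono h0_mem ⟨by linarith, hρ1⟩ hρ
  · exact le_of_tendsto hlim <| (eventually_ge_atTop ρ).mono fun σ hσ =>
      hanti hρ1 (hρ1.trans hσ) hσ
end

section
/- Let X be uniformly distributed on a finite set 𝒳 and let Y have arbitrary (finite) alphabet, with joint law P_X P_{Y|X}. Define the information density i(x;y) = log₂(P_{Y|X}(y|x)/P_Y(y)) and I(X;Y) = E[i(X;Y)]. Then for every positive integer k, E[|i(X;Y) - I(X;Y)|^k] ≤ (2 log₂|𝒳| + (k/ln 2)(1 + |𝒳|^(1/k)))^k. -/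
/-!
Write `i = i⁺ - i⁻`. Since `P_Y(y) ≥ P_{Y|X}(y|x) / |𝒳|`, the positive part satisfies
`i⁺ ≤ log₂ |𝒳|`. The negative part is `(log₂ (P_Y / P_{Y|X}))⁺`, and `ln t ≤ m t^(1/m)` gives
`E[(i⁻)^m] ≤ (m / ln 2)^m E[P_Y / P_{Y|X}] ≤ (m / ln 2)^m`. With `m = 1` this yields
`|I| ≤ log₂ |𝒳| + 1 / ln 2`, hence `|i - I| ≤ c + i⁻` for `c = 2 log₂ |𝒳| + 1 / ln 2`, and
Minkowski's inequality in `L^k` with `m = k` gives `‖i - I‖_k ≤ c + k / ln 2`. This is at most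
the claimed bound because `1 ≤ k |𝒳|^(1/k)`.
-/

open Real Finset

lemma weighted_Lp_add_le_of_nonneg {ι : Type*} (s : Finset ι) {w f g : ι → ℝ}
    (hw : ∀ i ∈ s, 0 ≤ w i) (hf : ∀ i ∈ s, 0 ≤ f i) (hg : ∀ i ∈ s, 0 ≤ g i) {k : ℕ}
    (hk : k ≠ 0) :
    (∑ i ∈ s, w i * (f i + g i) ^ k) ^ (k⁻¹ : ℝ) ≤
      (∑ i ∈ s, w i * f i ^ k) ^ (k⁻¹ : ℝ) + (∑ i ∈ s, w i * g i ^ k) ^ (k⁻¹ : ℝ) := by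
  have hk1 : (1 : ℝ) ≤ k := by exact_mod_cast Nat.one_le_iff_ne_zero.mpr hk
  have scale : ∀ a : ι → ℝ, ∑ i ∈ s, (w i ^ (k⁻¹ : ℝ) * a i) ^ (k : ℝ) = ∑ i ∈ s, w i * a i ^ k :=
    fun a => sum_congr rfl fun i hi => by
      rw [rpow_natCast, mul_pow, rpow_inv_natCast_pow (hw i hi) hk]
  have minkowski := Lp_add_le_of_nonneg (s := s) (f := fun i => w i ^ (k⁻¹ : ℝ) * f i)
    (g := fun i => w i ^ (k⁻¹ : ℝ) * g i) hk1
    (fun i hi => mul_nonneg (rpow_nonneg (hw i hi) _) (hf i hi))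
    (fun i hi => mul_nonneg (rpow_nonneg (hw i hi) _) (hg i hi))
  simp only [← mul_add, one_div] at minkowski
  rwa [scale, scale, scale] at minkowski

lemma sum_mul_add_pow_le_of_sum_mul_pow_le {ι : Type*} (s : Finset ι) {w f : ι → ℝ}
    (hw : ∀ i ∈ s, 0 ≤ w i) (hw1 : ∑ i ∈ s, w i = 1) (hf : ∀ i ∈ s, 0 ≤ f i) {c B : ℝ}
    (hc : 0 ≤ c) (hB : 0 ≤ B) {k : ℕ} (hk : k ≠ 0)
    (hfB : ∑ i ∈ s, w i * f i ^ k ≤ B ^ k) :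
    ∑ i ∈ s, w i * (c + f i) ^ k ≤ (c + B) ^ k := by
  have hk0 : (0 : ℝ) < k := by positivity
  have hmoment : ∀ a : ι → ℝ, (∀ i ∈ s, 0 ≤ a i) → 0 ≤ ∑ i ∈ s, w i * a i ^ k :=
    fun a ha => sum_nonneg fun i hi => mul_nonneg (hw i hi) (pow_nonneg (ha i hi) k)
  have hconst : (∑ i ∈ s, w i * c ^ k) ^ (k⁻¹ : ℝ) = c := by
    rw [← sum_mul, hw1, one_mul, pow_rpow_inv_natCast hc hk]
  have hfB' : (∑ i ∈ s, w i * f i ^ k) ^ (k⁻¹ : ℝ) ≤ B := by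
    rwa [rpow_inv_le_iff_of_pos (hmoment f hf) hB hk0, rpow_natCast]
  have minkowski := weighted_Lp_add_le_of_nonneg s hw (fun _ _ => hc) hf hk
  have hnorm_nonneg : 0 ≤ c + (∑ i ∈ s, w i * f i ^ k) ^ (k⁻¹ : ℝ) :=
    add_nonneg hc (rpow_nonneg (hmoment f hf) _)
  rw [hconst, rpow_inv_le_iff_of_pos (hmoment _ fun i hi => add_nonneg hc (hf i hi))
    hnorm_nonneg hk0, rpow_natCast] at minkowski
  exact minkowski.trans (pow_le_pow_left₀ hnorm_nonneg (by gcongr) k)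

lemma posPart_logb_pow_le {b t : ℝ} (hb : 1 < b) (ht : 0 ≤ t) {m : ℕ} (hm : m ≠ 0) :
    (logb b t)⁺ ^ m ≤ (m / log b) ^ m * t := by
  have hlogb : 0 < log b := log_pos hb
  have hm0 : (0 : ℝ) < m := by positivity
  have hlogb_le : (logb b t)⁺ ≤ m / log b * t ^ (m⁻¹ : ℝ) := by
    refine sup_le ?_ (by positivity)
    calc logb b t ≤ t ^ (m⁻¹ : ℝ) / (m : ℝ)⁻¹ / log b :=
          div_le_div_of_nonneg_right (log_le_rpow_div ht (inv_pos.2 hm0)) hlogb.le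
      _ = m / log b * t ^ (m⁻¹ : ℝ) := by field_simp
  calc (logb b t)⁺ ^ m ≤ (m / log b * t ^ (m⁻¹ : ℝ)) ^ m :=
        pow_le_pow_left₀ (posPart_nonneg _) hlogb_le m
    _ = (m / log b) ^ m * t := by rw [mul_pow, rpow_inv_natCast_pow ht hm]

namespace UniformInput

variable {X Y : Type*} [Fintype X]

noncomputable def jointLaw (W : X → Y → ℝ) (x : X) (y : Y) : ℝ :=
  (1 / (Fintype.card X : ℝ)) * W x y

noncomputable def outputLaw (W : X → Y → ℝ) (y : Y) : ℝ := ∑ x', jointLaw W x' y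

/-- Off the support of `W` this is `logb 2 0 = 0`, a value that always carries zero weight. -/
noncomputable def infoDensity (W : X → Y → ℝ) (x : X) (y : Y) : ℝ :=
  logb 2 (W x y / outputLaw W y)

variable {W : X → Y → ℝ}

lemma jointLaw_nonneg (hW : ∀ x y, 0 ≤ W x y) (x : X) (y : Y) : 0 ≤ jointLaw W x y :=
  mul_nonneg (by positivity) (hW x y)

lemma outputLaw_nonneg (hW : ∀ x y, 0 ≤ W x y) (y : Y) : 0 ≤ outputLaw W y :=
  sum_nonneg fun x _ => jointLaw_nonneg hW x y

lemma jointLaw_le_outputLaw (hW : ∀ x y, 0 ≤ W x y) (x : X) (y : Y) :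
    jointLaw W x y ≤ outputLaw W y :=
  single_le_sum (fun x' _ => jointLaw_nonneg hW x' y) (mem_univ x)

lemma infoDensity_le_logb_card (hW : ∀ x y, 0 ≤ W x y) (x : X) (y : Y) :
    infoDensity W x y ≤ logb 2 (Fintype.card X) := by
  have hcard : (1 : ℝ) ≤ Fintype.card X := by exact_mod_cast Fintype.card_pos_iff.2 ⟨x⟩
  rcases (hW x y).eq_or_lt with hzero | hpos
  · rw [infoDensity, ← hzero, zero_div, logb_zero]
    exact logb_nonneg one_lt_two hcard
  have houtput : 0 < outputLaw W y :=
    (mul_pos (by positivity) hpos).trans_le (jointLaw_le_outputLaw hW x y)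
  refine logb_le_logb_of_le one_lt_two (by positivity) ?_
  rw [div_le_iff₀ houtput]
  have := jointLaw_le_outputLaw hW x y
  rwa [jointLaw, one_div, inv_mul_le_iff₀ (by positivity)] at this

lemma negPart_infoDensity (x : X) (y : Y) :
    (infoDensity W x y)⁻ = (logb 2 (outputLaw W y / W x y))⁺ := by
  rw [← posPart_neg, infoDensity, ← logb_inv, inv_div]

lemma abs_infoDensity_le (hW : ∀ x y, 0 ≤ W x y) (x : X) (y : Y) :
    |infoDensity W x y| ≤ logb 2 (Fintype.card X) + (infoDensity W x y)⁻ := by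
  have hcard : (1 : ℝ) ≤ Fintype.card X := by exact_mod_cast Fintype.card_pos_iff.2 ⟨x⟩
  rw [← posPart_add_negPart]
  gcongr
  exact sup_le (infoDensity_le_logb_card hW x y) (logb_nonneg one_lt_two hcard)

lemma jointLaw_mul_negPart_infoDensity_pow_le (hW : ∀ x y, 0 ≤ W x y) {m : ℕ} (hm : m ≠ 0)
    (x : X) (y : Y) :
    jointLaw W x y * (infoDensity W x y)⁻ ^ m ≤
      (m / log 2) ^ m * (1 / (Fintype.card X : ℝ) * outputLaw W y) := by
  have := outputLaw_nonneg hW y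
  rcases (hW x y).eq_or_lt with hzero | hpos
  · rw [jointLaw, ← hzero, mul_zero, zero_mul]
    positivity
  rw [negPart_infoDensity]
  calc jointLaw W x y * (logb 2 (outputLaw W y / W x y))⁺ ^ m
      ≤ jointLaw W x y * ((m / log 2) ^ m * (outputLaw W y / W x y)) :=
        mul_le_mul_of_nonneg_left (posPart_logb_pow_le one_lt_two (by positivity) hm)
          (jointLaw_nonneg hW x y)
    _ = (m / log 2) ^ m * (1 / (Fintype.card X : ℝ) * outputLaw W y) := by
        rw [jointLaw]
        field_simp

variable [Fintype Y]

noncomputable def mutualInfo (W : X → Y → ℝ) : ℝ :=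
  ∑ x, ∑ y, jointLaw W x y * infoDensity W x y

lemma sum_jointLaw [Nonempty X] (hrow : ∀ x, ∑ y, W x y = 1) :
    ∑ x, ∑ y, jointLaw W x y = 1 := by
  simp only [jointLaw, ← mul_sum, hrow, mul_one, sum_const, card_univ, nsmul_eq_mul]
  field_simp

lemma sum_outputLaw [Nonempty X] (hrow : ∀ x, ∑ y, W x y = 1) : ∑ y, outputLaw W y = 1 := by
  rw [← sum_jointLaw hrow, sum_comm]
  rfl

lemma sum_jointLaw_mul_negPart_infoDensity_pow_le [Nonempty X] (hW : ∀ x y, 0 ≤ W x y)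
    (hrow : ∀ x, ∑ y, W x y = 1) {m : ℕ} (hm : m ≠ 0) :
    ∑ x, ∑ y, jointLaw W x y * (infoDensity W x y)⁻ ^ m ≤ (m / log 2) ^ m := by
  calc ∑ x, ∑ y, jointLaw W x y * (infoDensity W x y)⁻ ^ m
      ≤ ∑ x : X, ∑ y, (m / log 2) ^ m * (1 / (Fintype.card X : ℝ) * outputLaw W y) :=
        sum_le_sum fun x _ => sum_le_sum fun y _ =>
          jointLaw_mul_negPart_infoDensity_pow_le hW hm x y
    _ = (m / log 2) ^ m := by
        simp only [← mul_sum, sum_outputLaw hrow, sum_const, card_univ, nsmul_eq_mul]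
        field_simp

lemma abs_mutualInfo_le [Nonempty X] (hW : ∀ x y, 0 ≤ W x y) (hrow : ∀ x, ∑ y, W x y = 1) :
    |mutualInfo W| ≤ logb 2 (Fintype.card X) + 1 / log 2 := by
  calc |mutualInfo W| ≤ ∑ x, ∑ y, jointLaw W x y * |infoDensity W x y| := by
        refine (abs_sum_le_sum_abs _ _).trans (sum_le_sum fun x _ =>
          (abs_sum_le_sum_abs _ _).trans_eq (sum_congr rfl fun y _ => ?_))
        rw [abs_mul, abs_of_nonneg (jointLaw_nonneg hW x y)]
    _ ≤ ∑ x, ∑ y, jointLaw W x y * (logb 2 (Fintype.card X) + (infoDensity W x y)⁻) :=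
        sum_le_sum fun x _ => sum_le_sum fun y _ =>
          mul_le_mul_of_nonneg_left (abs_infoDensity_le hW x y) (jointLaw_nonneg hW x y)
    _ = logb 2 (Fintype.card X) + ∑ x, ∑ y, jointLaw W x y * (infoDensity W x y)⁻ ^ 1 := by
        simp only [mul_add, sum_add_distrib, ← sum_mul, sum_jointLaw hrow, pow_one, one_mul]
    _ ≤ logb 2 (Fintype.card X) + 1 / log 2 := by
        simpa using sum_jointLaw_mul_negPart_infoDensity_pow_le hW hrow one_ne_zero

lemma abs_infoDensity_sub_mutualInfo_le [Nonempty X] (hW : ∀ x y, 0 ≤ W x y)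
    (hrow : ∀ x, ∑ y, W x y = 1) (x : X) (y : Y) :
    |infoDensity W x y - mutualInfo W| ≤
      2 * logb 2 (Fintype.card X) + 1 / log 2 + (infoDensity W x y)⁻ := by
  linarith [abs_sub (infoDensity W x y) (mutualInfo W), abs_infoDensity_le hW x y,
    abs_mutualInfo_le hW hrow]

lemma sum_jointLaw_mul_abs_infoDensity_sub_mutualInfo_pow_le [Nonempty X]
    (hW : ∀ x y, 0 ≤ W x y) (hrow : ∀ x, ∑ y, W x y = 1) {k : ℕ} (hk : k ≠ 0) :
    ∑ x, ∑ y, jointLaw W x y * |infoDensity W x y - mutualInfo W| ^ k ≤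
      (2 * logb 2 (Fintype.card X) + 1 / log 2 + k / log 2) ^ k := by
  have hc : 0 ≤ 2 * logb 2 (Fintype.card X) + 1 / log 2 := by
    have hcard : (1 : ℝ) ≤ Fintype.card X := by exact_mod_cast Fintype.card_pos (α := X)
    have := logb_nonneg one_lt_two hcard
    positivity
  calc ∑ x, ∑ y, jointLaw W x y * |infoDensity W x y - mutualInfo W| ^ k
      ≤ ∑ x, ∑ y, jointLaw W x y *
          (2 * logb 2 (Fintype.card X) + 1 / log 2 + (infoDensity W x y)⁻) ^ k :=
        sum_le_sum fun x _ => sum_le_sum fun y _ => mul_le_mul_of_nonneg_left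
          (pow_le_pow_left₀ (abs_nonneg _) (abs_infoDensity_sub_mutualInfo_le hW hrow x y) k)
          (jointLaw_nonneg hW x y)
    _ ≤ (2 * logb 2 (Fintype.card X) + 1 / log 2 + k / log 2) ^ k := by
        simp only [← Fintype.sum_prod_type']
        exact sum_mul_add_pow_le_of_sum_mul_pow_le univ (fun p _ => jointLaw_nonneg hW p.1 p.2)
          ((Fintype.sum_prod_type' (jointLaw W)).trans (sum_jointLaw hrow))
          (fun p _ => negPart_nonneg _) hc (by positivity) hk
          ((Fintype.sum_prod_type' fun x y => jointLaw W x y * (infoDensity W x y)⁻ ^ k).trans_le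
            (sum_jointLaw_mul_negPart_infoDensity_pow_le hW hrow hk))

end UniformInput

/-- Bounded absolute central moments of the information density for a channel with
uniform inputs on a finite alphabet. -/
theorem information_density_moment_bound {X Y : Type*} [Fintype X] [Fintype Y] [Nonempty X]
    (W : X → Y → ℝ) (hW : ∀ x y, 0 ≤ W x y) (hrow : ∀ x, ∑ y, W x y = 1)
    (k : ℕ) (hk : 0 < k) :
    (∑ x, ∑ y, (1 / (Fintype.card X : ℝ)) * W x y *
        |Real.logb 2 (W x y / (∑ x', (1 / (Fintype.card X : ℝ)) * W x' y))
          - ∑ x'', ∑ y', (1 / (Fintype.card X : ℝ)) * W x'' y' *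
              Real.logb 2 (W x'' y' / (∑ x', (1 / (Fintype.card X : ℝ)) * W x' y'))| ^ k)
      ≤ (2 * Real.logb 2 (Fintype.card X)
          + ((k : ℝ) / Real.log 2) * (1 + (Fintype.card X : ℝ) ^ ((1:ℝ)/(k:ℝ)))) ^ k := by
  open UniformInput in
  have hcard : (1 : ℝ) ≤ Fintype.card X := by exact_mod_cast Fintype.card_pos (α := X)
  have hbase : 0 ≤ 2 * logb 2 (Fintype.card X) + 1 / log 2 + k / log 2 := by
    have := logb_nonneg one_lt_two hcard
    positivity
  have hroot : (1 : ℝ) ≤ k * (Fintype.card X : ℝ) ^ ((1 : ℝ) / k) :=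
    one_le_mul_of_one_le_of_one_le (by exact_mod_cast hk) (one_le_rpow hcard (by positivity))
  calc _ = ∑ x, ∑ y, jointLaw W x y * |infoDensity W x y - mutualInfo W| ^ k := rfl
    _ ≤ (2 * logb 2 (Fintype.card X) + 1 / log 2 + k / log 2) ^ k :=
        sum_jointLaw_mul_abs_infoDensity_sub_mutualInfo_pow_le hW hrow hk.ne'
    _ ≤ _ := by
        refine pow_le_pow_left₀ hbase ?_ k
        have := div_le_div_of_nonneg_right hroot (log_pos one_lt_two).le
        linarith [show k / log 2 * (1 + (Fintype.card X : ℝ) ^ ((1 : ℝ) / k)) =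
          k / log 2 + k * (Fintype.card X : ℝ) ^ ((1 : ℝ) / k) / log 2 by ring]
end
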